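/- Let H be a real inner product space and σ > 0. Define the normalization map φ ↦ φ̃ on H by φ̃ = φ/‖φ‖ if φ ≠ 0 and φ̃ = 0 otherwise. Then the kernel G on H given by G(φ, φ') = ‖φ‖ · ‖φ'‖ · exp(-‖φ̃ - φ̃'‖²/(2σ²)) is positive definite: for every n, every φ_1, …, φ_n ∈ H and every c_1, …, c_n ∈ ℝ, one has Σ_{i,j} c_i c_j ‖φ_i‖ ‖φ_j‖ exp(-‖φ̃_i - φ̃_j‖²/(2σ²)) ≥ 0. -/

import Mathlib

/-!
The Gram matrix of the kernel is `D G D` with `D = diag ‖φᵢ‖` and `G` the Gaussian matrix of the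
normalized vectors, so it suffices that Gaussian matrices are positive semidefinite. Expanding
`‖x - y‖²` factors `G` as `E M E` with `E` diagonal and `M` the entrywise exponential of a multiple
of a Gram matrix; `M` is a convergent sum of nonnegative multiples of Hadamard powers of that Gram
matrix, which are positive semidefinite by the Schur product theorem.
-/

open Real Classical

noncomputable def normalize' {H : Type*} [NormedAddCommGroup H] [InnerProductSpace ℝ H]
    (v : H) : H :=
  if v = 0 then 0 else ‖v‖⁻¹ • v

namespace Matrix

variable {ι : Type*} [Fintype ι]

theorem star_dotProduct_mulVec_eq_sum_sum (A : Matrix ι ι ℝ) (x : ι → ℝ) :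
    star x ⬝ᵥ (A *ᵥ x) = ∑ i, ∑ j, x i * x j * A i j := by
  simp only [star_trivial, dotProduct, mulVec, Finset.mul_sum]
  exact Finset.sum_congr rfl fun i _ => Finset.sum_congr rfl fun j _ => by ring

theorem PosSemidef.map_pow {A : Matrix ι ι ℝ} (hA : A.PosSemidef) (k : ℕ) :
    (A.map (· ^ k)).PosSemidef := by
  induction k with
  | zero =>
    convert posSemidef_vecMulVec_self_star (1 : ι → ℝ)
    ext; simp [vecMulVec]
  | succ k ih =>
    rw [show A.map (· ^ (k + 1)) = A.map (· ^ k) ⊙ A by ext; simp [pow_succ]]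
    exact ih.hadamard hA

theorem PosSemidef.map_exp {A : Matrix ι ι ℝ} (hA : A.PosSemidef) :
    (A.map Real.exp).PosSemidef := by
  refine .of_dotProduct_mulVec_nonneg (hA.isHermitian.map _ fun _ => rfl) fun x => ?_
  have hseries : HasSum (fun k => (k.factorial : ℝ)⁻¹ * (star x ⬝ᵥ (A.map (· ^ k) *ᵥ x)))
      (star x ⬝ᵥ (A.map Real.exp *ᵥ x)) := by
    simp only [star_dotProduct_mulVec_eq_sum_sum, Finset.mul_sum, map_apply]
    refine hasSum_sum fun i _ => hasSum_sum fun j _ => ?_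
    have := (NormedSpace.expSeries_div_hasSum_exp (A i j)).mul_left (x i * x j)
    simpa [← Real.exp_eq_exp_ℝ, div_eq_inv_mul, mul_left_comm] using this
  exact hseries.nonneg fun k =>
    mul_nonneg (by positivity) ((hA.map_pow k).dotProduct_mulVec_nonneg x)

theorem PosSemidef.diagonal_mul_mul_diagonal {A : Matrix ι ι ℝ} (hA : A.PosSemidef)
    (d : ι → ℝ) :
    (diagonal d * A * diagonal d).PosSemidef := by
  simpa using hA.conjTranspose_mul_mul_same (diagonal d)

end Matrix

open Matrix

theorem posSemidef_gaussian {ι H : Type*} [Fintype ι] [NormedAddCommGroup H]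
    [InnerProductSpace ℝ H]
    {γ : ℝ} (hγ : 0 ≤ γ) (x : ι → H) :
    (of fun i j => Real.exp (-γ * ‖x i - x j‖ ^ 2)).PosSemidef := by
  set d : ι → ℝ := fun i => Real.exp (-γ * ‖x i‖ ^ 2)
  have hfactor : (of fun i j => Real.exp (-γ * ‖x i - x j‖ ^ 2))
      = diagonal d * ((2 * γ) • gram ℝ x).map Real.exp * diagonal d := by
    ext i j
    simp only [of_apply, mul_diagonal, diagonal_mul, map_apply, Matrix.smul_apply, gram_apply, d,
      smul_eq_mul, ← Real.exp_add, norm_sub_sq_real]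
    congr 1; ring
  rw [hfactor]
  exact (((posSemidef_gram ℝ x).smul (by positivity)).map_exp).diagonal_mul_mul_diagonal d

theorem weighted_normalized_gaussian_kernel_pos_def_general
    {H : Type*} [NormedAddCommGroup H] [InnerProductSpace ℝ H]
    (σ : ℝ)
    (n : ℕ) (φ : Fin n → H) (c : Fin n → ℝ) :
    0 ≤ ∑ i, ∑ j,
        c i * c j * (‖φ i‖ * ‖φ j‖ *
          Real.exp (-‖normalize' (φ i) - normalize' (φ j)‖ ^ 2 / (2 * σ ^ 2))) := by
  set G : Matrix (Fin n) (Fin n) ℝ :=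
    of fun i j => Real.exp (-(2 * σ ^ 2)⁻¹ * ‖normalize' (φ i) - normalize' (φ j)‖ ^ 2)
  have hG : G.PosSemidef := posSemidef_gaussian (by positivity) _
  have hweighted := hG.diagonal_mul_mul_diagonal fun i => ‖φ i‖
  refine (hweighted.dotProduct_mulVec_nonneg c).trans_eq ?_
  rw [star_dotProduct_mulVec_eq_sum_sum]
  refine Finset.sum_congr rfl fun i _ => Finset.sum_congr rfl fun j _ => ?_
  simp only [G, mul_diagonal, diagonal_mul, of_apply, neg_mul, inv_mul_eq_div, ← neg_div]
  ring

/-- The kernel `G(φ, φ') = ‖φ‖ ‖φ'‖ exp(-‖φ̃ - φ̃'‖²/(2σ²))` is positive definite on a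
real inner product space `H`. -/
theorem weighted_normalized_gaussian_kernel_pos_def
    {H : Type*} [NormedAddCommGroup H] [InnerProductSpace ℝ H]
    (σ : ℝ) (hσ : 0 < σ)
    (n : ℕ) (φ : Fin n → H) (c : Fin n → ℝ) :
    0 ≤ ∑ i, ∑ j,
        c i * c j * (‖φ i‖ * ‖φ j‖ *
          Real.exp (-‖normalize' (φ i) - normalize' (φ j)‖ ^ 2 / (2 * σ ^ 2))) :=
  weighted_normalized_gaussian_kernel_pos_def_general σ n φ c
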